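/- arXiv:2509.04614 — 2 statements merged into one kernel-verified Lean document; each statement's English description precedes it below -/
import Mathlib

section
/- Any covering of the cluster manifold X'_F(m) by cluster tori of triangulations must use at least #X'_{F_2}(m) triangulations: distinct points of X'_{F_2}(m) ⊆ X'_F(m) cannot lie in the same cluster torus, since each triangulation admits a unique proper P¹(F_2)-coloring with the fixed boundary conditions. -/
/-- The projective line over a field `F`. -/
abbrev P1 (F : Type*) [Field F] := Projectivization F (F × F)

/-- The point `[1:0]` of the projective line. -/
noncomputable def ptZero (F : Type*) [Field F] : P1 F :=
  Projectivization.mk F (1, 0) (fun h => one_ne_zero (congrArg Prod.fst h))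

/-- The point `[0:1]` of the projective line. -/
noncomputable def ptInf (F : Type*) [Field F] : P1 F :=
  Projectivization.mk F (0, 1) (fun h => one_ne_zero (congrArg Prod.snd h))

/-- The point `[1:1]` of the projective line. -/
noncomputable def ptOne (F : Type*) [Field F] : P1 F :=
  Projectivization.mk F (1, 1) (fun h => one_ne_zero (congrArg Prod.fst h))

/-- `p = (i, j)` is a diagonal of the convex `(m+1)`-gon with vertices `0, …, m`:
`i < j`, the two vertices are not consecutive, and `(0, m)` is excluded (it is a side). -/
def IsDiag (m : ℕ) (p : ℕ × ℕ) : Prop :=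
  p.1 + 2 ≤ p.2 ∧ p.2 ≤ m ∧ ¬(p.1 = 0 ∧ p.2 = m)

instance (m : ℕ) (p : ℕ × ℕ) : Decidable (IsDiag m p) := by unfold IsDiag; infer_instance

/-- The type of diagonals of the convex `(m+1)`-gon. -/
abbrev Diagonal (m : ℕ) := {p : ℕ × ℕ // IsDiag m p}

/-- Two diagonals cross in the interior of the polygon. -/
def Crossing {m : ℕ} (d e : Diagonal m) : Prop :=
  (d.val.1 < e.val.1 ∧ e.val.1 < d.val.2 ∧ d.val.2 < e.val.2) ∨
  (e.val.1 < d.val.1 ∧ d.val.1 < e.val.2 ∧ e.val.2 < d.val.2)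

/-- A triangulation of the convex `(m+1)`-gon: a maximal set of pairwise
non-crossing diagonals (maximality = having `(m+1) - 3` diagonals). -/
structure Triangulation (m : ℕ) where
  diags : Finset (Diagonal m)
  noncross : ∀ d ∈ diags, ∀ e ∈ diags, ¬ Crossing d e
  card_eq : diags.card = m - 2

/-- `y` takes distinct values on the endpoints of every diagonal of `T`
(i.e. `y` lies in the cluster torus of `T`). -/
def ProperDiags {F : Type*} [Field F] {m : ℕ} (T : Triangulation m) (y : ℕ → P1 F) : Prop :=
  ∀ d ∈ T.diags, y d.val.1 ≠ y d.val.2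

/-- `c` is a proper coloring of the full graph of the triangulation `T`
(sides of the polygon together with the diagonals of `T`). -/
def ProperGraph {F : Type*} [Field F] {m : ℕ} (T : Triangulation m) (c : ℕ → P1 F) : Prop :=
  (∀ i < m, c i ≠ c (i + 1)) ∧ c m ≠ c 0 ∧ ProperDiags T c

/-- `y` is a point of `X_F(m)`: `y 0 = [1:0]`, `y m = [0:1]`, consecutive entries distinct. -/
def XCond (F : Type*) [Field F] (m : ℕ) (y : ℕ → P1 F) : Prop :=
  y 0 = ptZero F ∧ y m = ptInf F ∧ ∀ i < m, y i ≠ y (i + 1)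

/-- `y` is the alternating sequence `([1:0], [0:1], [1:0], …)` on `0, …, m`. -/
def IsAltSeq (F : Type*) [Field F] (m : ℕ) (y : ℕ → P1 F) : Prop :=
  ∀ i ≤ m, y i = if i % 2 = 0 then ptZero F else ptInf F

/-- The diagonal `d` is valid for the point `y`: its endpoints have distinct labels and
on each of the two sub-polygons determined by `d` the labels take at least three values. -/
def ValidDiag (F : Type*) [Field F] (m : ℕ) (y : ℕ → P1 F) (d : Diagonal m) : Prop :=
  y d.val.1 ≠ y d.val.2 ∧
  3 ≤ (y '' (Set.Icc d.val.1 d.val.2)).ncard ∧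
  3 ≤ (y '' (Set.Icc 0 d.val.1 ∪ Set.Icc d.val.2 m)).ncard

/-- `T'` is obtained from `T` by removing the diagonals `old` and adding the diagonals `new`. -/
def SwapMove {m : ℕ} (T T' : Triangulation m) (old new : Finset (Diagonal m)) : Prop :=
  old ⊆ T.diags ∧ T'.diags = (T.diags \ old) ∪ new

/-- Zig-zag hexagonal move: inside a hexagonal sub-polygon with vertices
`v 0 < ⋯ < v 5`, replace the zig-zag `{15, 35, 36}` by the zig-zag `{24, 26, 46}`
(in the labels `1, …, 6` of the hexagon). -/
def ZigZagMoveOne {m : ℕ} (T T' : Triangulation m) : Prop :=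
  ∃ v : Fin 6 → ℕ, StrictMono v ∧ v 5 ≤ m ∧
    ∃ (h1 : IsDiag m (v 0, v 4)) (h2 : IsDiag m (v 2, v 4)) (h3 : IsDiag m (v 2, v 5))
      (h4 : IsDiag m (v 1, v 3)) (h5 : IsDiag m (v 1, v 5)) (h6 : IsDiag m (v 3, v 5)),
      SwapMove T T' {⟨(v 0, v 4), h1⟩, ⟨(v 2, v 4), h2⟩, ⟨(v 2, v 5), h3⟩}
        {⟨(v 1, v 3), h4⟩, ⟨(v 1, v 5), h5⟩, ⟨(v 3, v 5), h6⟩}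

/-- Inscribed-triangle hexagonal move: inside a hexagonal sub-polygon with vertices
`v 0 < ⋯ < v 5`, replace the inscribed triangle `{13, 35, 51}` by `{24, 46, 62}`. -/
def InscribedMoveOne {m : ℕ} (T T' : Triangulation m) : Prop :=
  ∃ v : Fin 6 → ℕ, StrictMono v ∧ v 5 ≤ m ∧
    ∃ (h1 : IsDiag m (v 0, v 2)) (h2 : IsDiag m (v 2, v 4)) (h3 : IsDiag m (v 0, v 4))
      (h4 : IsDiag m (v 1, v 3)) (h5 : IsDiag m (v 3, v 5)) (h6 : IsDiag m (v 1, v 5)),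
      SwapMove T T' {⟨(v 0, v 2), h1⟩, ⟨(v 2, v 4), h2⟩, ⟨(v 0, v 4), h3⟩}
        {⟨(v 1, v 3), h4⟩, ⟨(v 3, v 5), h5⟩, ⟨(v 1, v 5), h6⟩}

/-- A hexagonal move (in either direction). -/
def HexMove {m : ℕ} (T T' : Triangulation m) : Prop :=
  ZigZagMoveOne T T' ∨ ZigZagMoveOne T' T ∨ InscribedMoveOne T T' ∨ InscribedMoveOne T' T

/-- The restrictions to `{0, …, m}` of the points of `X'_F(m)`
(points of `X_F(m)` distinct from the alternating sequence). -/
def XsetFin (F : Type*) [Field F] (m : ℕ) : Set (Fin (m + 1) → P1 F) :=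
  {z | ∃ y : ℕ → P1 F, XCond F m y ∧ ¬ IsAltSeq F m y ∧ ∀ i : Fin (m + 1), z i = y i.val}

/-! A triangulation `T` with `m - 2` diagonals cuts every sub-polygon it triangulates into two
smaller triangulated pieces along a triangle `a k b` standing on its base `a b`.  Colouring that
triangle properly with only three colours forces the colour of the apex `k` from those of `a`
and `b`, so by induction a proper colouring with values in `P¹(𝔽₂)` is determined by its values
at `0` and `m`.  Hence the points of `X'_{𝔽₂}(m)`, embedded in `X'_F(m)`, lie in pairwise
distinct cluster tori, and a covering needs one triangulation for each of them. -/

open Finset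

lemma eq_of_ne_of_ne_of_card_le_three {α : Type*} [Finite α] (hα : Nat.card α ≤ 3)
    {x y z w : α} (hxy : x ≠ y) (hzx : z ≠ x) (hzy : z ≠ y) (hwx : w ≠ x) (hwy : w ≠ y) :
    z = w := by
  classical
  have := Fintype.ofFinite α
  by_contra hzw
  have h4 : ({x, y, z, w} : Finset α).card = 4 := by
    rw [card_insert_of_notMem, card_insert_of_notMem, card_pair hzw] <;> simp [*, Ne.symm]
  have := card_le_univ ({x, y, z, w} : Finset α)
  rw [Fintype.card_eq_nat_card] at this
  omega

section Polygon

variable {m : ℕ}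

instance : Finite (Diagonal m) :=
  ((Set.finite_Iic m).prod (Set.finite_Iic m) |>.subset
    fun p (⟨h, hm, _⟩ : IsDiag m p) => ⟨(by omega : p.1 ≤ m), hm⟩).to_subtype

instance : Finite (Triangulation m) :=
  Finite.of_injective Triangulation.diags fun T T' h => by cases T; cases T'; congr

variable (D : Finset (Diagonal m))

def innerDiags (a b : ℕ) : Finset (Diagonal m) :=
  D.filter fun d => a ≤ d.val.1 ∧ d.val.2 ≤ b ∧ d.val ≠ (a, b)

def IsEdge (a k : ℕ) : Prop :=
  k = a + 1 ∨ ∃ d ∈ D, d.val = (a, k)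

/-- `D` contains as many diagonals inside the sub-polygon `a, …, b` as a triangulation of it. -/
def Triangulates (a b : ℕ) : Prop :=
  b - a - 2 ≤ (innerDiags D a b).card

lemma card_filter_val_eq_le (a k : ℕ) :
    (D.filter (·.val = (a, k))).card ≤ min 1 (k - a - 1) := by
  have hle : (D.filter (·.val = (a, k))).card ≤ 1 :=
    card_le_one.mpr fun d hd e he =>
      Subtype.ext ((mem_filter.mp hd).2.trans (mem_filter.mp he).2.symm)
  rcases Nat.lt_or_ge k (a + 2) with hk | hk
  · have hempty : D.filter (·.val = (a, k)) = ∅ := filter_eq_empty_iff.mpr fun d _ hd => by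
      have := d.2.1
      simp only [hd] at this
      omega
    simp [hempty]
  · omega

variable {D}

/-- The apex `k` is the farthest vertex joined to `a` by an edge. -/
lemma exists_apex_card_innerDiags_le (hD : ∀ d ∈ D, ∀ e ∈ D, ¬Crossing d e) {a b : ℕ}
    (hab : a + 2 ≤ b) :
    ∃ k, a < k ∧ k < b ∧ IsEdge D a k ∧
      (innerDiags D a b).card ≤ (innerDiags D a k).card + (D.filter (·.val = (a, k))).card +
        ((innerDiags D k b).card + (D.filter (·.val = (k, b))).card) := by
  classical
  set k := Nat.findGreatest (IsEdge D a) (b - 1)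
  have hedge : IsEdge D a (a + 1) := Or.inl rfl
  have hak : a + 1 ≤ k := Nat.le_findGreatest (by omega) hedge
  have hkb : k ≤ b - 1 := Nat.findGreatest_le _
  have hkedge : IsEdge D a k := Nat.findGreatest_spec (by omega) hedge
  refine ⟨k, by omega, by omega, hkedge, ?_⟩
  refine (card_le_card fun d hd => ?_).trans ((card_union_le _ _).trans
    (add_le_add (card_union_le _ _) (card_union_le _ _)))
  obtain ⟨hdD, had, hdb, hdab⟩ := mem_filter.mp hd
  have hd2 := d.2.1
  simp only [innerDiags, mem_union, mem_filter]
  by_cases hdk : d.val.2 ≤ k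
  · by_cases h : d.val = (a, k) <;> simp [*]
  by_cases hkd : k ≤ d.val.1
  · by_cases h : d.val = (k, b) <;> simp [*]
  exfalso
  rcases eq_or_lt_of_le had with hda | hda
  · -- `(a, d.2)` would be an edge beyond the farthest one
    refine Nat.findGreatest_is_greatest (by omega : k < d.val.2) ?_ (Or.inr ⟨d, hdD, ?_⟩)
    · have : d.val.2 ≠ b := fun h => hdab (Prod.ext hda.symm h)
      omega
    · exact Prod.ext hda.symm rfl
  · -- otherwise `d` crosses the diagonal `(a, k)`
    obtain hk1 | ⟨e, heD, he⟩ := hkedge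
    · omega
    exact hD e heD d hdD (Or.inl ⟨by rw [he]; omega, by rw [he]; omega, by rw [he]; omega⟩)

lemma card_innerDiags_le (hD : ∀ d ∈ D, ∀ e ∈ D, ¬Crossing d e) (a b : ℕ) :
    (innerDiags D a b).card ≤ b - a - 2 := by
  induction hn : b - a using Nat.strong_induction_on generalizing a b with
  | _ n ih =>
  rcases Nat.lt_or_ge b (a + 3) with hb | hb
  · have hempty : innerDiags D a b = ∅ := filter_eq_empty_iff.mpr fun d _ ⟨had, hdb, hdab⟩ =>
      hdab (by have := d.2.1; exact Prod.ext (by omega) (by omega))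
    simp [hempty]
  obtain ⟨k, hak, hkb, -, hcard⟩ := exists_apex_card_innerDiags_le hD (by omega : a + 2 ≤ b)
  have := ih _ (by omega) a k rfl
  have := ih _ (by omega) k b rfl
  have := card_filter_val_eq_le D a k
  have := card_filter_val_eq_le D k b
  omega

lemma Triangulates.exists_apex (hD : ∀ d ∈ D, ∀ e ∈ D, ¬Crossing d e) {a b : ℕ}
    (h : Triangulates D a b) (hab : a + 2 ≤ b) :
    ∃ k, a < k ∧ k < b ∧ IsEdge D a k ∧ IsEdge D k b ∧
      Triangulates D a k ∧ Triangulates D k b := by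
  obtain ⟨k, hak, hkb, hedge, hcard⟩ := exists_apex_card_innerDiags_le hD hab
  have := card_innerDiags_le hD a k
  have := card_innerDiags_le hD k b
  have := card_filter_val_eq_le D a k
  have := card_filter_val_eq_le D k b
  unfold Triangulates at h ⊢
  refine ⟨k, hak, hkb, hedge, ?_, by omega, by omega⟩
  rcases Nat.lt_or_ge b (k + 2) with hb | hb
  · exact Or.inl (by omega)
  · obtain ⟨d, hd⟩ := card_pos.mp (by omega : 0 < (D.filter (·.val = (k, b))).card)
    exact Or.inr ⟨d, (mem_filter.mp hd).1, (mem_filter.mp hd).2⟩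

lemma IsEdge.apply_ne {α : Type*} {c : ℕ → α} (hside : ∀ i < m, c i ≠ c (i + 1))
    (hdiag : ∀ d ∈ D, c d.val.1 ≠ c d.val.2) {a k : ℕ} (h : IsEdge D a k) (hk : k ≤ m) :
    c a ≠ c k := by
  obtain rfl | ⟨d, hd, hdak⟩ := h
  · exact hside a (by omega)
  · simpa [hdak] using hdiag d hd

lemma Triangulates.eqOn_of_card_le_three {α : Type*} [Finite α] (hα : Nat.card α ≤ 3)
    (hD : ∀ d ∈ D, ∀ e ∈ D, ¬Crossing d e) {c c' : ℕ → α}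
    (hside : ∀ i < m, c i ≠ c (i + 1)) (hdiag : ∀ d ∈ D, c d.val.1 ≠ c d.val.2)
    (hside' : ∀ i < m, c' i ≠ c' (i + 1)) (hdiag' : ∀ d ∈ D, c' d.val.1 ≠ c' d.val.2)
    {a b : ℕ} (h : Triangulates D a b) (hbm : b ≤ m) (ha : c a = c' a) (hb : c b = c' b)
    (hab : c a ≠ c b) : Set.EqOn c c' (Set.Icc a b) := by
  induction hn : b - a using Nat.strong_induction_on generalizing a b with
  | _ n ih =>
  rintro i ⟨hai, hib⟩
  rcases Nat.lt_or_ge b (a + 2) with hb2 | hb2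
  · obtain rfl | rfl : i = a ∨ i = b := by omega
    exacts [ha, hb]
  obtain ⟨k, hak, hkb, hak', hkb', hTak, hTkb⟩ := h.exists_apex hD hb2
  have hck : c k = c' k := eq_of_ne_of_ne_of_card_le_three hα hab
    (hak'.apply_ne hside hdiag (by omega)).symm (hkb'.apply_ne hside hdiag hbm)
    (ha ▸ (hak'.apply_ne hside' hdiag' (by omega)).symm)
    (hb ▸ hkb'.apply_ne hside' hdiag' hbm)
  rcases le_total i k with hik | hki
  · exact ih _ (by omega) hTak (by omega) ha hck (hak'.apply_ne hside hdiag (by omega)) rfl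
      ⟨hai, hik⟩
  · exact ih _ (by omega) hTkb hbm hck hb (hkb'.apply_ne hside hdiag hbm) rfl ⟨hki, hib⟩

end Polygon

section ProjectiveLine

variable {K F : Type*} [Field K] [Field F]

lemma ptZero_ne_ptInf : ptZero F ≠ ptInf F := by
  rw [ptZero, ptInf, Ne, Projectivization.mk_eq_mk_iff']
  rintro ⟨a, ha⟩
  simpa using congrArg Prod.fst ha

lemma ptZero_ne_ptOne : ptZero F ≠ ptOne F := by
  rw [ptZero, ptOne, Ne, Projectivization.mk_eq_mk_iff']
  rintro ⟨a, ha⟩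
  have h1 := congrArg Prod.fst ha
  have h2 := congrArg Prod.snd ha
  simp_all

lemma ptInf_ne_ptOne : ptInf F ≠ ptOne F := by
  rw [ptInf, ptOne, Ne, Projectivization.mk_eq_mk_iff']
  rintro ⟨a, ha⟩
  have h1 := congrArg Prod.fst ha
  have h2 := congrArg Prod.snd ha
  simp_all

lemma card_P1_zmod_two : Nat.card (P1 (ZMod 2)) = 3 := by
  rw [Projectivization.card_of_finrank_two] <;> simp

open scoped Classical in
/-- The inclusion `P¹(𝔽₂) ⊆ P¹(F)`. -/
noncomputable def ofZModTwo (F : Type*) [Field F] (p : P1 (ZMod 2)) : P1 F :=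
  if p = ptZero (ZMod 2) then ptZero F else if p = ptInf (ZMod 2) then ptInf F else ptOne F

@[simp]
lemma ofZModTwo_ptZero : ofZModTwo F (ptZero (ZMod 2)) = ptZero F := by
  simp [ofZModTwo]

@[simp]
lemma ofZModTwo_ptInf : ofZModTwo F (ptInf (ZMod 2)) = ptInf F := by
  simp [ofZModTwo, ptZero_ne_ptInf.symm]

lemma ofZModTwo_injective : Function.Injective (ofZModTwo F) := by
  intro p q h
  unfold ofZModTwo at h
  split_ifs at h <;>
    simp_all [ptZero_ne_ptInf, ptZero_ne_ptOne, ptInf_ne_ptOne, ptZero_ne_ptInf.symm,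
      ptZero_ne_ptOne.symm, ptInf_ne_ptOne.symm]
  exact eq_of_ne_of_ne_of_card_le_three card_P1_zmod_two.le ptZero_ne_ptInf
    ‹p ≠ ptZero _› ‹p ≠ ptInf _› ‹q ≠ ptZero _› ‹q ≠ ptInf _›

variable {m : ℕ} {ι : P1 K → P1 F}

lemma XCond.comp (hι : Function.Injective ι) (h0 : ι (ptZero K) = ptZero F)
    (hinf : ι (ptInf K) = ptInf F) {y : ℕ → P1 K} (hy : XCond K m y) : XCond F m (ι ∘ y) :=
  ⟨by simp [hy.1, h0], by simp [hy.2.1, hinf], fun i hi => hι.ne (hy.2.2 i hi)⟩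

lemma IsAltSeq.of_comp (hι : Function.Injective ι) (h0 : ι (ptZero K) = ptZero F)
    (hinf : ι (ptInf K) = ptInf F) {y : ℕ → P1 K} (hy : IsAltSeq F m (ι ∘ y)) :
    IsAltSeq K m y :=
  fun i hi => hι (by simpa [apply_ite ι, h0, hinf] using hy i hi)

lemma ProperDiags.of_comp {T : Triangulation m} {y : ℕ → P1 K} (hy : ProperDiags T (ι ∘ y)) :
    ProperDiags T y :=
  fun d hd h => hy d hd (congrArg ι h)

lemma triangulates_diags (T : Triangulation m) : Triangulates T.diags 0 m := by
  have hinner : innerDiags T.diags 0 m = T.diags := filter_true_of_mem fun d _ =>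
    ⟨Nat.zero_le _, d.2.2.1, fun h => d.2.2.2 ⟨congrArg Prod.fst h, congrArg Prod.snd h⟩⟩
  simp [Triangulates, hinner, T.card_eq]

lemma XCond.eqOn_of_properDiags {T : Triangulation m} {c c' : ℕ → P1 (ZMod 2)}
    (hc : XCond (ZMod 2) m c) (hc' : XCond (ZMod 2) m c') (hT : ProperDiags T c)
    (hT' : ProperDiags T c') : Set.EqOn c c' (Set.Icc 0 m) :=
  (triangulates_diags T).eqOn_of_card_le_three card_P1_zmod_two.le T.noncross hc.2.2 hT
    hc'.2.2 hT' le_rfl (hc.1.trans hc'.1.symm) (hc.2.1.trans hc'.2.1.symm)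
    (hc.1 ▸ hc.2.1 ▸ ptZero_ne_ptInf)

end ProjectiveLine

theorem stmt15 (F : Type*) [Field F] (m : ℕ) (S : Set (Triangulation m))
    (hcov : ∀ y : ℕ → P1 F, XCond F m y → ¬ IsAltSeq F m y →
      ∃ T ∈ S, ProperDiags T y) :
    (XsetFin (ZMod 2) m).ncard ≤ S.ncard := by
  have key : ∀ z ∈ XsetFin (ZMod 2) m, ∃ T ∈ S, ∃ y : ℕ → P1 (ZMod 2),
      XCond (ZMod 2) m y ∧ ProperDiags T y ∧ ∀ i : Fin (m + 1), z i = y i := by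
    rintro z ⟨y, hy, halt, hzy⟩
    obtain ⟨T, hTS, hT⟩ := hcov (ofZModTwo F ∘ y)
      (hy.comp ofZModTwo_injective ofZModTwo_ptZero ofZModTwo_ptInf)
      (fun h => halt (h.of_comp ofZModTwo_injective ofZModTwo_ptZero ofZModTwo_ptInf))
    exact ⟨T, hTS, y, hy, hT.of_comp, hzy⟩
  rcases (XsetFin (ZMod 2) m).eq_empty_or_nonempty with hX | ⟨z₀, hz₀⟩
  · simp [hX]
  have : Nonempty (Triangulation m) := ⟨(key z₀ hz₀).choose⟩
  choose! f hfS y hy hfy hzy using key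
  refine Set.ncard_le_ncard_of_injOn f hfS (fun z hz z' hz' hzz' => funext fun i => ?_)
  rw [hzy z hz, hzy z' hz', (hy z hz).eqOn_of_properDiags (hy z' hz') (hfy z hz)
    (hzz' ▸ hfy z' hz') ⟨Nat.zero_le _, i.is_le⟩]
end

section
/- Let F be a field with at least 3 elements, and pick distinct a, b ∈ P¹(F) \ {[1:0],[0:1]}. Set y = ([1:0], a, [0:1], a, b, [1:0], [0:1], b, a, [1:0], b, [0:1]) ∈ X_F(11). Then for every z ∈ X'_{F_2}(11), the set of invalid diagonals of y is not contained in the set of invalid diagonals of z. -/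
/-- The witness point `y = ([1:0], a, [0:1], a, b, [1:0], [0:1], b, a, [1:0], b, [0:1])`. -/
noncomputable def yWitness (F : Type*) [Field F] (a b : P1 F) : ℕ → P1 F := fun i =>
  match i with
  | 0 => ptZero F | 1 => a | 2 => ptInf F | 3 => a | 4 => b | 5 => ptZero F
  | 6 => ptInf F | 7 => b | 8 => a | 9 => ptZero F | 10 => b | _ => ptInf F


/-! ### Auxiliary material for the proof -/

section Aux

lemma neZI : ptZero (ZMod 2) ≠ ptInf (ZMod 2) := by
  intro h
  rw [ptZero, ptInf, Projectivization.mk_eq_mk_iff] at h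
  obtain ⟨u, hu⟩ := h
  have := congrArg Prod.fst hu
  simp at this

lemma neZO : ptZero (ZMod 2) ≠ ptOne (ZMod 2) := by
  intro h
  rw [ptZero, ptOne, Projectivization.mk_eq_mk_iff] at h
  obtain ⟨u, hu⟩ := h
  have h1 := congrArg Prod.fst hu
  have h2 := congrArg Prod.snd hu
  simp at h1 h2
  rw [h1] at h2
  simp at h2

lemma neIO : ptInf (ZMod 2) ≠ ptOne (ZMod 2) := by
  intro h
  rw [ptInf, ptOne, Projectivization.mk_eq_mk_iff] at h
  obtain ⟨u, hu⟩ := h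
  have h1 := congrArg Prod.fst hu
  have h2 := congrArg Prod.snd hu
  simp at h1 h2
  rw [h2] at h1
  simp at h1

lemma classify (p : P1 (ZMod 2)) :
    p = ptZero (ZMod 2) ∨ p = ptInf (ZMod 2) ∨ p = ptOne (ZMod 2) := by
  induction p using Projectivization.ind with
  | h v hv =>
    obtain ⟨x, y⟩ := v
    fin_cases x <;> fin_cases y
    · exact absurd rfl hv
    · exact Or.inr (Or.inl (by rw [ptInf, Projectivization.mk_eq_mk_iff]; exact ⟨1, by decide⟩))
    · exact Or.inl (by rw [ptZero, Projectivization.mk_eq_mk_iff]; exact ⟨1, by decide⟩)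
    · exact Or.inr (Or.inr (by rw [ptOne, Projectivization.mk_eq_mk_iff]; exact ⟨1, by decide⟩))

open Classical in
noncomputable def eP : P1 (ZMod 2) → Fin 3 := fun p =>
  if p = ptZero (ZMod 2) then 0 else if p = ptInf (ZMod 2) then 1 else 2

lemma eZ : eP (ptZero (ZMod 2)) = 0 := by simp [eP]
lemma eI : eP (ptInf (ZMod 2)) = 1 := by simp [eP, neZI.symm]
lemma eO : eP (ptOne (ZMod 2)) = 2 := by simp [eP, neZO.symm, neIO.symm]

lemma einj : Function.Injective eP := by
  intro p q h
  rcases classify p with rfl | rfl | rfl <;> rcases classify q with rfl | rfl | rfl <;>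
    simp [eZ, eI, eO] at h ⊢

def diagL : List (ℕ × ℕ) :=
  [(0,5),(0,9),(5,9),(1,3),(1,8),(3,8),(2,6),(2,11),(6,11),(4,7),(4,10),(7,10)]

def good (W : ℕ → Fin 3) : Prop :=
  ∃ p ∈ diagL, W p.1 ≠ W p.2 ∧
    (∀ v : Fin 3, ∃ k ∈ Finset.Icc p.1 p.2, W k = v) ∧
    (∀ v : Fin 3, ∃ k ∈ Finset.Icc 0 p.1 ∪ Finset.Icc p.2 11, W k = v)

instance (W : ℕ → Fin 3) : Decidable (good W) := by unfold good; infer_instance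

def goodL (l : List (Fin 3)) : Prop := good (fun n => l.getD (11 - n) 0)
instance (l : List (Fin 3)) : Decidable (goodL l) := by unfold goodL; infer_instance

def step (L : List (List (Fin 3))) : List (List (Fin 3)) :=
  L.flatMap fun l => (([0,1,2] : List (Fin 3)).filter fun x => decide (l.head? ≠ some x)).map (· :: l)

def stepn : ℕ → List (List (Fin 3)) → List (List (Fin 3))
  | 0, L => L
  | n+1, L => step (stepn n L)

def seqs (n : ℕ) : List (List (Fin 3)) := stepn n [[0]]

def PL (l : List (Fin 3)) : Prop :=
  l.head? = some 1 → l ≠ [1,0,1,0,1,0,1,0,1,0,1,0] → goodL l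

instance (l : List (Fin 3)) : Decidable (PL l) := by unfold PL; infer_instance

set_option maxRecDepth 4000 in
theorem chunk1 : ∀ l ∈ stepn 8 [[1,0,1,0]], PL l := by decide
set_option maxRecDepth 4000 in
theorem chunk2 : ∀ l ∈ stepn 8 [[2,0,1,0]], PL l := by decide
set_option maxRecDepth 4000 in
theorem chunk3 : ∀ l ∈ stepn 8 [[0,2,1,0]], PL l := by decide
set_option maxRecDepth 4000 in
theorem chunk4 : ∀ l ∈ stepn 8 [[1,2,1,0]], PL l := by decide
set_option maxRecDepth 4000 in
theorem chunk5 : ∀ l ∈ stepn 8 [[1,0,2,0]], PL l := by decide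
set_option maxRecDepth 4000 in
theorem chunk6 : ∀ l ∈ stepn 8 [[2,0,2,0]], PL l := by decide
set_option maxRecDepth 4000 in
theorem chunk7 : ∀ l ∈ stepn 8 [[0,1,2,0]], PL l := by decide
set_option maxRecDepth 4000 in
theorem chunk8 : ∀ l ∈ stepn 8 [[2,1,2,0]], PL l := by decide

lemma stepnApp (n : ℕ) : ∀ A B, stepn n (A ++ B) = stepn n A ++ stepn n B := by
  induction n with
  | zero => intro A B; rfl
  | succ n ih =>
    intro A B
    show step (stepn n (A ++ B)) = step (stepn n A) ++ step (stepn n B)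
    rw [ih, step, List.flatMap_append]; rfl

theorem checkAll : ∀ l ∈ seqs 11, PL l := by
  intro l hl
  have h11 : seqs 11 = stepn 8 (stepn 3 [[0]]) := rfl
  have h3 : stepn 3 [[0]] =
      [[1,0,1,0]] ++ [[2,0,1,0]] ++ [[0,2,1,0]] ++ [[1,2,1,0]] ++
      [[1,0,2,0]] ++ [[2,0,2,0]] ++ [[0,1,2,0]] ++ [[2,1,2,0]] := by decide
  rw [h11, h3] at hl
  simp only [stepnApp, List.mem_append] at hl
  rcases hl with ((((((h|h)|h)|h)|h)|h)|h)|h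
  exacts [chunk1 l h, chunk2 l h, chunk3 l h, chunk4 l h,
          chunk5 l h, chunk6 l h, chunk7 l h, chunk8 l h]

def rl (w : ℕ → Fin 3) : ℕ → List (Fin 3)
  | 0 => [w 0]
  | n+1 => w (n+1) :: rl w n

lemma rl_mem (w : ℕ → Fin 3) (h0 : w 0 = 0) (hc : ∀ i < 11, w i ≠ w (i+1)) :
    ∀ n ≤ 11, rl w n ∈ seqs n ∧ (rl w n).head? = some (w n) := by
  intro n
  induction n with
  | zero => intro _; exact ⟨by simp [rl, seqs, stepn, h0], rfl⟩
  | succ n ih =>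
    intro hn
    obtain ⟨hm, hh⟩ := ih (by omega)
    refine ⟨?_, rfl⟩
    show w (n+1) :: rl w n ∈ step (seqs n)
    refine List.mem_flatMap.2 ⟨rl w n, hm, List.mem_map.2 ⟨w (n+1), List.mem_filter.2 ⟨?_, ?_⟩, rfl⟩⟩
    · have : ∀ v : Fin 3, v ∈ ([0,1,2] : List (Fin 3)) := by decide
      exact this _
    · rw [hh]
      simp only [decide_eq_true_eq, ne_eq, Option.some.injEq]
      exact fun h => hc n (by omega) h

lemma rl_getD (w : ℕ → Fin 3) : ∀ n ≤ 11, (rl w 11).getD (11 - n) 0 = w n := by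
  intro n hn
  interval_cases n <;> rfl

lemma three_le {α : Type*} {S : Set α} (hfin : S.Finite) {x0 x1 x2 : α}
    (h0 : x0 ∈ S) (h1 : x1 ∈ S) (h2 : x2 ∈ S)
    (d01 : x0 ≠ x1) (d02 : x0 ≠ x2) (d12 : x1 ≠ x2) : 3 ≤ S.ncard := by
  have h3 : ({x0, x1, x2} : Set α).ncard = 3 :=
    Set.ncard_eq_three.2 ⟨x0, x1, x2, d01, d02, d12, rfl⟩
  have hle : ({x0, x1, x2} : Set α).ncard ≤ S.ncard := by
    apply Set.ncard_le_ncard _ hfin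
    intro x hx
    rcases hx with rfl | rfl | rfl <;> assumption
  omega

lemma ne_of_eP {p q : P1 (ZMod 2)} (h : eP p ≠ eP q) : p ≠ q := fun h' => h (congrArg eP h')

lemma validz (z : ℕ → P1 (ZMod 2)) (W : ℕ → Fin 3) (hW : ∀ n ≤ 11, W n = eP (z n))
    (p : ℕ × ℕ) (hd : IsDiag 11 p)
    (h1 : W p.1 ≠ W p.2)
    (h2 : ∀ v : Fin 3, ∃ k ∈ Finset.Icc p.1 p.2, W k = v)
    (h3 : ∀ v : Fin 3, ∃ k ∈ Finset.Icc 0 p.1 ∪ Finset.Icc p.2 11, W k = v) :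
    ValidDiag (ZMod 2) 11 z ⟨p, hd⟩ := by
  obtain ⟨hd1, hd2, _⟩ := hd
  have hp1 : p.1 ≤ 11 := by omega
  have hin : ∀ k ∈ Finset.Icc p.1 p.2, k ≤ 11 := by
    intro k hk; have := (Finset.mem_Icc.1 hk).2; omega
  have hout : ∀ k ∈ Finset.Icc 0 p.1 ∪ Finset.Icc p.2 11, k ≤ 11 := by
    intro k hk
    rcases Finset.mem_union.1 hk with h | h
    · have := (Finset.mem_Icc.1 h).2; omega
    · exact (Finset.mem_Icc.1 h).2
  -- extract witnesses
  obtain ⟨k0, hk0, hv0⟩ := h2 0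
  obtain ⟨k1, hk1, hv1⟩ := h2 1
  obtain ⟨k2, hk2, hv2⟩ := h2 2
  obtain ⟨m0, hm0, hu0⟩ := h3 0
  obtain ⟨m1, hm1, hu1⟩ := h3 1
  obtain ⟨m2, hm2, hu2⟩ := h3 2
  rw [hW _ (hin _ hk0)] at hv0
  rw [hW _ (hin _ hk1)] at hv1
  rw [hW _ (hin _ hk2)] at hv2
  rw [hW _ (hout _ hm0)] at hu0
  rw [hW _ (hout _ hm1)] at hu1
  rw [hW _ (hout _ hm2)] at hu2
  rw [hW _ hp1, hW _ (by omega : p.2 ≤ 11)] at h1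
  refine ⟨ne_of_eP h1, ?_, ?_⟩
  · refine three_le ((Set.finite_Icc p.1 p.2).image z)
      ⟨k0, Finset.mem_Icc.1 hk0, rfl⟩ ⟨k1, Finset.mem_Icc.1 hk1, rfl⟩
      ⟨k2, Finset.mem_Icc.1 hk2, rfl⟩ ?_ ?_ ?_
    · exact fun h => by have := congrArg eP h; rw [hv0, hv1] at this; exact absurd this (by decide)
    · exact fun h => by have := congrArg eP h; rw [hv0, hv2] at this; exact absurd this (by decide)
    · exact fun h => by have := congrArg eP h; rw [hv1, hv2] at this; exact absurd this (by decide)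
  · have hfin : (Set.Icc 0 p.1 ∪ Set.Icc p.2 11).Finite :=
      (Set.finite_Icc 0 p.1).union (Set.finite_Icc p.2 11)
    have hmem : ∀ k, k ∈ Finset.Icc 0 p.1 ∪ Finset.Icc p.2 11 →
        k ∈ Set.Icc 0 p.1 ∪ Set.Icc p.2 11 := by
      intro k hk
      rcases Finset.mem_union.1 hk with h | h
      · exact Or.inl (Finset.mem_Icc.1 h)
      · exact Or.inr (Finset.mem_Icc.1 h)
    refine three_le (hfin.image z)
      ⟨m0, hmem _ hm0, rfl⟩ ⟨m1, hmem _ hm1, rfl⟩ ⟨m2, hmem _ hm2, rfl⟩ ?_ ?_ ?_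
    · exact fun h => by have := congrArg eP h; rw [hu0, hu1] at this; exact absurd this (by decide)
    · exact fun h => by have := congrArg eP h; rw [hu0, hu2] at this; exact absurd this (by decide)
    · exact fun h => by have := congrArg eP h; rw [hu1, hu2] at this; exact absurd this (by decide)

end Aux

theorem stmt17 (F : Type*) [Field F] (a b : P1 F) (hab : a ≠ b)
    (ha0 : a ≠ ptZero F) (hai : a ≠ ptInf F) (hb0 : b ≠ ptZero F) (hbi : b ≠ ptInf F) :
    ∀ z : ℕ → P1 (ZMod 2), XCond (ZMod 2) 11 z → ¬ IsAltSeq (ZMod 2) 11 z →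
      ¬ ({d : Diagonal 11 | ¬ ValidDiag F 11 (yWitness F a b) d} ⊆
          {d : Diagonal 11 | ¬ ValidDiag (ZMod 2) 11 z d}) := by
  intro z hX hAlt hsub
  obtain ⟨hz0, hz11, hzc⟩ := hX
  set w : ℕ → Fin 3 := fun n => eP (z n) with hw
  have hw0 : w 0 = 0 := by rw [hw]; simp only [hz0, eZ]
  have hw11 : w 11 = 1 := by rw [hw]; simp only [hz11, eI]
  have hwc : ∀ i < 11, w i ≠ w (i+1) := fun i hi h => hzc i hi (einj h)
  obtain ⟨hmem, hhd⟩ := rl_mem w hw0 hwc 11 le_rfl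
  have hW : ∀ n ≤ 11, (fun n => (rl w 11).getD (11 - n) 0) n = eP (z n) := by
    intro n hn; exact rl_getD w n hn
  have hne : rl w 11 ≠ [1,0,1,0,1,0,1,0,1,0,1,0] := by
    intro hEq
    apply hAlt
    intro i hi
    have hwi : w i = if i % 2 = 0 then 0 else 1 := by
      rw [← rl_getD w i hi, hEq]
      interval_cases i <;> rfl
    apply einj
    by_cases h2 : i % 2 = 0
    · rw [if_pos h2, eZ]; show w i = 0; rw [hwi, if_pos h2]
    · rw [if_neg h2, eI]; show w i = 1; rw [hwi, if_neg h2]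
  have hgood : goodL (rl w 11) := checkAll _ hmem (by rw [hhd, hw11]) hne
  obtain ⟨p, hp, h1, h2, h3⟩ := hgood
  have key : ∀ hd : IsDiag 11 p,
      (¬ ValidDiag F 11 (yWitness F a b) ⟨p, hd⟩) → False := by
    intro hd hy
    exact hsub hy (validz z _ hW p hd h1 h2 h3)
  simp only [diagL, List.mem_cons, List.not_mem_nil, or_false] at hp
  rcases hp with rfl|rfl|rfl|rfl|rfl|rfl|rfl|rfl|rfl|rfl|rfl|rfl <;>
    exact key (by decide) (fun hv => hv.1 (by simp [yWitness]))
end
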